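/- Let F be a finite field with |F| = q ≥ 2 and let p ∈ [0,1] be a real number. Consider the weighted sum over all pairs (k, ε) with k = (a,b,c,d,k13,k14,k25,k26,k47,k57,k78,k79) ∈ F^12 and ε = (ε1,…,ε9) ∈ Bool^9, where each pair has weight q^{-12} · ∏_{i=1}^{9} w(ε_i) with w(true) = 1−p and w(false) = p. Then the total weight of pairs for which both erased decoding matrices F̃_{t1} = (f̃3 f̃8) and F̃_{t2} = (f̃6 f̃9) are invertible (where f̃1 = (a,b) if ε1 else 0, f̃2 = (c,d) if ε2 else 0, f̃3 = k13·f̃1 if ε3 else 0, f̃4 = k14·f̃1 if ε4 else 0, f̃5 = k25·f̃2 if ε5 else 0, f̃6 = k26·f̃2 if ε6 else 0, f̃7 = k47·f̃4 + k57·f̃5 if ε7 else 0, f̃8 = k78·f̃7 if ε8 else 0, f̃9 = k79·f̃7 if ε9 else 0) equals (q+1)(q-1)^10(1−p)^9/q^11. Hence the failure probability of the butterfly network with channel failure probability p is P̃_e = 1 − (q+1)(q-1)^10(1−p)^9/q^11. -/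

import Mathlib

/-! Both decoding determinants factor: `det F̃_{t₁} = k13 k78 k25 k57 (ad - cb)` when
`ε1, ε2, ε3, ε5, ε7, ε8` all hold and `0` otherwise, and symmetrically at `t₂`. So both sinks
decode exactly when every channel works, the source kernels `(a, b)`, `(c, d)` are independent
and the eight local coefficients are nonzero. Such coefficient vectors are counted by
`|GL₂(F)| (q - 1)^8 = q (q + 1) (q - 1)^10`, and each carries weight `(1 - p)^9 / q^12`.
The failure weight is the complement, since all weights add up to `1`. -/

/- Active global encoding kernels of the butterfly network with channel erasures:
`fᵢt` is the usual linear-combination value when the Boolean `eᵢ` (channel `eᵢ`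
successful) is true, and the zero vector otherwise. The source kernel is
`K_s = [[a,c],[b,d]]`, i.e. `f1 = (a,b)ᵀ`, `f2 = (c,d)ᵀ`. -/

def f1t {F : Type*} [Field F] (a b : F) (e1 : Bool) : Fin 2 → F :=
  if e1 then ![a, b] else 0

def f2t {F : Type*} [Field F] (c d : F) (e2 : Bool) : Fin 2 → F :=
  if e2 then ![c, d] else 0

def f3t {F : Type*} [Field F] (a b k13 : F) (e1 e3 : Bool) : Fin 2 → F :=
  if e3 then k13 • f1t a b e1 else 0

def f4t {F : Type*} [Field F] (a b k14 : F) (e1 e4 : Bool) : Fin 2 → F :=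
  if e4 then k14 • f1t a b e1 else 0

def f5t {F : Type*} [Field F] (c d k25 : F) (e2 e5 : Bool) : Fin 2 → F :=
  if e5 then k25 • f2t c d e2 else 0

def f6t {F : Type*} [Field F] (c d k26 : F) (e2 e6 : Bool) : Fin 2 → F :=
  if e6 then k26 • f2t c d e2 else 0

def f7t {F : Type*} [Field F] (a b c d k14 k47 k25 k57 : F) (e1 e2 e4 e5 e7 : Bool) :
    Fin 2 → F :=
  if e7 then k47 • f4t a b k14 e1 e4 + k57 • f5t c d k25 e2 e5 else 0

def f8t {F : Type*} [Field F] (a b c d k14 k47 k78 k25 k57 : F) (e1 e2 e4 e5 e7 e8 : Bool) :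
    Fin 2 → F :=
  if e8 then k78 • f7t a b c d k14 k47 k25 k57 e1 e2 e4 e5 e7 else 0

def f9t {F : Type*} [Field F] (a b c d k14 k47 k79 k25 k57 : F) (e1 e2 e4 e5 e7 e9 : Bool) :
    Fin 2 → F :=
  if e9 then k79 • f7t a b c d k14 k47 k25 k57 e1 e2 e4 e5 e7 else 0

/- The erased decoding matrix at sink `t₁`: columns `f̃3` and `f̃8`. -/
def Ft1t {F : Type*} [Field F] (a b c d k13 k14 k47 k78 k25 k57 : F)
    (e1 e2 e3 e4 e5 e7 e8 : Bool) : Matrix (Fin 2) (Fin 2) F :=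
  !![f3t a b k13 e1 e3 0, f8t a b c d k14 k47 k78 k25 k57 e1 e2 e4 e5 e7 e8 0;
     f3t a b k13 e1 e3 1, f8t a b c d k14 k47 k78 k25 k57 e1 e2 e4 e5 e7 e8 1]

/- The erased decoding matrix at sink `t₂`: columns `f̃6` and `f̃9`. -/
def Ft2t {F : Type*} [Field F] (a b c d k14 k47 k79 k25 k57 k26 : F)
    (e1 e2 e4 e5 e6 e7 e9 : Bool) : Matrix (Fin 2) (Fin 2) F :=
  !![f6t c d k26 e2 e6 0, f9t a b c d k14 k47 k79 k25 k57 e1 e2 e4 e5 e7 e9 0;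
     f6t c d k26 e2 e6 1, f9t a b c d k14 k47 k79 k25 k57 e1 e2 e4 e5 e7 e9 1]

section

variable {F : Type*} [Field F]

/-- `f̃3` and `f̃4` are both multiples of `f̃1`, so the `k47 • f̃4` part of `f̃8` drops out. -/
theorem det_Ft1t (a b c d k13 k14 k47 k78 k25 k57 : F) (e1 e2 e3 e4 e5 e7 e8 : Bool) :
    (Ft1t a b c d k13 k14 k47 k78 k25 k57 e1 e2 e3 e4 e5 e7 e8).det =
      if e1 ∧ e2 ∧ e3 ∧ e5 ∧ e7 ∧ e8 then k13 * k78 * k25 * k57 * (a * d - c * b) else 0 := by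
  simp only [Ft1t, f8t, f7t, f5t, f4t, f3t, f2t, f1t, Matrix.det_fin_two_of]
  cases e1 <;> cases e2 <;> cases e3 <;> cases e4 <;> cases e5 <;> cases e7 <;> cases e8 <;>
    simp <;> ring

theorem det_Ft2t (a b c d k14 k47 k79 k25 k57 k26 : F) (e1 e2 e4 e5 e6 e7 e9 : Bool) :
    (Ft2t a b c d k14 k47 k79 k25 k57 k26 e1 e2 e4 e5 e6 e7 e9).det =
      if e1 ∧ e2 ∧ e4 ∧ e6 ∧ e7 ∧ e9 then -(k26 * k79 * k47 * k14 * (a * d - c * b)) else 0 := by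
  simp only [Ft2t, f9t, f7t, f6t, f5t, f4t, f2t, f1t, Matrix.det_fin_two_of]
  cases e1 <;> cases e2 <;> cases e4 <;> cases e5 <;> cases e6 <;> cases e7 <;> cases e9 <;>
    simp <;> ring

theorem linearIndependent_pair_iff_det_ne_zero (a b c d : F) :
    LinearIndependent F ![![a, b], ![c, d]] ↔ a * d - c * b ≠ 0 := by
  have hcol : (!![a, c; b, d]).col = ![![a, b], ![c, d]] := by
    ext i j; fin_cases i <;> fin_cases j <;> rfl
  rw [← hcol, Matrix.linearIndependent_cols_iff_isUnit, Matrix.isUnit_iff_isUnit_det,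
    Matrix.det_fin_two_of, isUnit_iff_ne_zero, mul_comm c b]

/-- Here `v = (a, b, c, d, k13, k14, k25, k26, k47, k57, k78, k79)`. -/
def IsButterflyCode (v : Fin 12 → F) : Prop :=
  LinearIndependent F ![![v 0, v 1], ![v 2, v 3]] ∧ ∀ i : Fin 8, v (Fin.natAdd 4 i) ≠ 0

theorem isUnit_Ft1t_and_isUnit_Ft2t_iff (v : Fin 12 → F) (e : Fin 9 → Bool) :
    (IsUnit (Ft1t (v 0) (v 1) (v 2) (v 3) (v 4) (v 5) (v 8) (v 10) (v 6) (v 9)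
          (e 0) (e 1) (e 2) (e 3) (e 4) (e 6) (e 7)) ∧
       IsUnit (Ft2t (v 0) (v 1) (v 2) (v 3) (v 5) (v 8) (v 11) (v 6) (v 9) (v 7)
          (e 0) (e 1) (e 3) (e 4) (e 5) (e 6) (e 8))) ↔
    e = (fun _ => true) ∧ IsButterflyCode v := by
  simp only [Matrix.isUnit_iff_isUnit_det, det_Ft1t, det_Ft2t, isUnit_iff_ne_zero,
    ite_ne_right_iff, neg_ne_zero, mul_ne_zero_iff, IsButterflyCode,
    linearIndependent_pair_iff_det_ne_zero, funext_iff, Fin.forall_fin_succ, IsEmpty.forall_iff,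
    Fin.reduceSucc, Fin.reduceNatAdd, and_true]
  tauto

/-- Coordinates `(f₁, f₂, k)` on the coefficient space, with `f₁ = (a, b)`, `f₂ = (c, d)`. -/
def butterflyCoeffEquiv : (Fin 2 → Fin 2 → F) × (Fin 8 → F) ≃ (Fin 12 → F) :=
  ((piFinTwoEquiv _).trans (Fin.appendEquiv 2 2)).prodCongr (Equiv.refl _) |>.trans
    (Fin.appendEquiv 4 8)

theorem isButterflyCode_butterflyCoeffEquiv (f : Fin 2 → Fin 2 → F) (k : Fin 8 → F) :
    IsButterflyCode (butterflyCoeffEquiv (f, k)) ↔ LinearIndependent F f ∧ ∀ i, k i ≠ 0 := by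
  have hf : ![![f 0 0, f 0 1], ![f 1 0, f 1 1]] = f := by
    ext i j; fin_cases i <;> fin_cases j <;> rfl
  change (LinearIndependent F ![![f 0 0, f 0 1], ![f 1 0, f 1 1]] ∧
    ∀ i, Fin.append (Fin.append (f 0) (f 1)) k (Fin.natAdd 4 i) ≠ 0) ↔ _
  rw [hf]
  simp only [Fin.append_right]

theorem card_isButterflyCode [Fintype F] :
    Nat.card {v : Fin 12 → F // IsButterflyCode v} =
      (Fintype.card F ^ 2 - 1) * (Fintype.card F ^ 2 - Fintype.card F) *
        (Fintype.card F - 1) ^ 8 := by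
  rw [← Nat.card_congr <| butterflyCoeffEquiv.subtypeEquiv fun x =>
      (isButterflyCode_butterflyCoeffEquiv x.1 x.2).symm,
    Nat.card_congr <| Equiv.subtypeProdEquivProd (p := (LinearIndependent F ·))
      (q := fun k : Fin 8 → F => ∀ i, k i ≠ 0),
    Nat.card_prod, card_linearIndependent (by simp),
    Nat.card_congr <| Equiv.subtypePiEquivPi (p := fun (_ : Fin 8) (x : F) => x ≠ 0),
    Nat.card_pi, ← Nat.card_congr unitsEquivNeZero, Nat.card_units, Module.finrank_fin_fun,
    Fin.prod_univ_two, Finset.prod_const, Finset.card_univ, Fintype.card_fin,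
    Nat.card_eq_fintype_card]
  simp

theorem sum_pi_bool_prod_ite_eq_one {R ι : Type*} [CommRing R] [Fintype ι] [DecidableEq ι]
    (p : R) :
    ∑ e : ι → Bool, ∏ i, (if e i then 1 - p else p) = 1 := by
  rw [← Fintype.prod_sum (fun (_ : ι) (b : Bool) => if b then 1 - p else p)]
  simp

open Classical in
theorem sum_sum_ite_isUnit_Ft1t_and_isUnit_Ft2t [Fintype F] {M : Type*} [AddCommMonoid M]
    (w : (Fin 9 → Bool) → M) :
    (∑ v : Fin 12 → F, ∑ e : Fin 9 → Bool,
        if IsUnit (Ft1t (v 0) (v 1) (v 2) (v 3) (v 4) (v 5) (v 8) (v 10) (v 6) (v 9)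
              (e 0) (e 1) (e 2) (e 3) (e 4) (e 6) (e 7)) ∧
           IsUnit (Ft2t (v 0) (v 1) (v 2) (v 3) (v 5) (v 8) (v 11) (v 6) (v 9) (v 7)
              (e 0) (e 1) (e 3) (e 4) (e 5) (e 6) (e 8)) then w e else 0) =
      Nat.card {v : Fin 12 → F // IsButterflyCode v} • w (fun _ => true) := by
  simp only [isUnit_Ft1t_and_isUnit_Ft2t_iff, ite_and, Fintype.sum_ite_eq']
  rw [Finset.sum_ite, Finset.sum_const_zero, add_zero, Finset.sum_const, ← Fintype.card_subtype,
    Nat.card_eq_fintype_card]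

end

/- Here `e = (ε1, …, ε9)`. -/
open Classical in
theorem butterfly_erased_network_failure_probability_general
    (F : Type*) [Field F] [Fintype F] (q : ℕ) (hq : Fintype.card F = q)
    (p : ℝ) :
    (∑ v : Fin 12 → F, ∑ e : Fin 9 → Bool,
        if IsUnit (Ft1t (v 0) (v 1) (v 2) (v 3) (v 4) (v 5) (v 8) (v 10) (v 6) (v 9)
              (e 0) (e 1) (e 2) (e 3) (e 4) (e 6) (e 7)) ∧
           IsUnit (Ft2t (v 0) (v 1) (v 2) (v 3) (v 5) (v 8) (v 11) (v 6) (v 9) (v 7)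
              (e 0) (e 1) (e 3) (e 4) (e 5) (e 6) (e 8)) then
          (1 / (q : ℝ) ^ 12) * ∏ i : Fin 9, (if e i then 1 - p else p)
        else 0) =
      ((q : ℝ) + 1) * ((q : ℝ) - 1) ^ 10 * (1 - p) ^ 9 / (q : ℝ) ^ 11 ∧
    (∑ v : Fin 12 → F, ∑ e : Fin 9 → Bool,
        if ¬ (IsUnit (Ft1t (v 0) (v 1) (v 2) (v 3) (v 4) (v 5) (v 8) (v 10) (v 6) (v 9)
                (e 0) (e 1) (e 2) (e 3) (e 4) (e 6) (e 7)) ∧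
              IsUnit (Ft2t (v 0) (v 1) (v 2) (v 3) (v 5) (v 8) (v 11) (v 6) (v 9) (v 7)
                (e 0) (e 1) (e 3) (e 4) (e 5) (e 6) (e 8))) then
          (1 / (q : ℝ) ^ 12) * ∏ i : Fin 9, (if e i then 1 - p else p)
        else 0) =
      1 - ((q : ℝ) + 1) * ((q : ℝ) - 1) ^ 10 * (1 - p) ^ 9 / (q : ℝ) ^ 11 := by
  have hq1 : 1 ≤ q := hq ▸ Fintype.card_pos
  have hq0 : (q : ℝ) ≠ 0 := by positivity
  have hsucc := sum_sum_ite_isUnit_Ft1t_and_isUnit_Ft2t (F := F)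
    fun e => 1 / (q : ℝ) ^ 12 * ∏ i : Fin 9, (if e i then 1 - p else p)
  have hcount : ((q ^ 2 - 1) * (q ^ 2 - q) * (q - 1) ^ 8 : ℕ) •
      (1 / (q : ℝ) ^ 12 * ∏ i : Fin 9, (if true then 1 - p else p)) =
      ((q : ℝ) + 1) * ((q : ℝ) - 1) ^ 10 * (1 - p) ^ 9 / (q : ℝ) ^ 11 := by
    simp only [if_true, Finset.prod_const, Finset.card_univ, Fintype.card_fin, nsmul_eq_mul]
    push_cast [hq1, Nat.pow_le_pow_left hq1 2, Nat.le_self_pow two_ne_zero q]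
    field_simp
    ring
  have hcompl (P : Prop) [Decidable P] (w : ℝ) :
      (if ¬P then w else 0) = w - if P then w else 0 := by
    split_ifs <;> simp
  beta_reduce at hsucc
  rw [card_isButterflyCode, hq, hcount] at hsucc
  refine ⟨hsucc, ?_⟩
  simp only [hcompl, Finset.sum_sub_distrib, hsucc, ← Finset.mul_sum,
    sum_pi_bool_prod_ite_eq_one, Finset.sum_const, Finset.card_univ, Fintype.card_fun,
    Fintype.card_fin, hq, nsmul_eq_mul, Nat.cast_pow]
  field_simp

open Classical in
theorem butterfly_erased_network_failure_probability
    (F : Type*) [Field F] [Fintype F] (q : ℕ) (hq : Fintype.card F = q) (hq2 : 2 ≤ q)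
    (p : ℝ) (hp : p ∈ Set.Icc (0 : ℝ) 1) :
    (∑ v : Fin 12 → F, ∑ e : Fin 9 → Bool,
        if IsUnit (Ft1t (v 0) (v 1) (v 2) (v 3) (v 4) (v 5) (v 8) (v 10) (v 6) (v 9)
              (e 0) (e 1) (e 2) (e 3) (e 4) (e 6) (e 7)) ∧
           IsUnit (Ft2t (v 0) (v 1) (v 2) (v 3) (v 5) (v 8) (v 11) (v 6) (v 9) (v 7)
              (e 0) (e 1) (e 3) (e 4) (e 5) (e 6) (e 8)) then
          (1 / (q : ℝ) ^ 12) * ∏ i : Fin 9, (if e i then 1 - p else p)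
        else 0) =
      ((q : ℝ) + 1) * ((q : ℝ) - 1) ^ 10 * (1 - p) ^ 9 / (q : ℝ) ^ 11 ∧
    (∑ v : Fin 12 → F, ∑ e : Fin 9 → Bool,
        if ¬ (IsUnit (Ft1t (v 0) (v 1) (v 2) (v 3) (v 4) (v 5) (v 8) (v 10) (v 6) (v 9)
                (e 0) (e 1) (e 2) (e 3) (e 4) (e 6) (e 7)) ∧
              IsUnit (Ft2t (v 0) (v 1) (v 2) (v 3) (v 5) (v 8) (v 11) (v 6) (v 9) (v 7)
                (e 0) (e 1) (e 3) (e 4) (e 5) (e 6) (e 8))) then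
          (1 / (q : ℝ) ^ 12) * ∏ i : Fin 9, (if e i then 1 - p else p)
        else 0) =
      1 - ((q : ℝ) + 1) * ((q : ℝ) - 1) ^ 10 * (1 - p) ^ 9 / (q : ℝ) ^ 11 :=
  butterfly_erased_network_failure_probability_general F q hq p
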